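/- arXiv:1812.08925 — 8 statements merged into one kernel-verified Lean document; each statement's English description precedes it below -/
import Mathlib

section
/- Let γ ≥ 1 and let the coefficients C^h_k be defined by C^h_0 = 0 for h ≥ 2, C^1_0 = 1, and the recursion C^h_k = γ C^h_{k-1} + ∑_{h₂=1}^{h-1} C^{h-h₂}_{k-1} C^{h₂}_{k-1} (with C^h_k = 0 for h < 1). Then for all k ≥ 1 and h ≥ 1, C^h_k ≤ k^{h-1} γ^{kh}. -/
/-! Induct on `k`, starting at `k = 0`, where `k ^ (h - 1) * γ ^ (k * h)` is exactly the initial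
value `C 0 h`. Writing the bound as `k ^ (h - 1) * (γ ^ k) ^ h`, each of the `h - 1` convolution
terms is at most `k ^ (h - 2) * (γ ^ k) ^ h`, and `k ^ (h - 1) + (h - 1) k ^ (h - 2) ≤ (k + 1) ^ (h - 1)`;
the extra factor `γ ≤ γ ^ h` is absorbed since `γ ≥ 1`. -/

open Finset

theorem pow_add_mul_pow_sub_one_le_add_one_pow {R : Type*} [CommRing R] [PartialOrder R]
    [IsOrderedRing R] {x : R} (hx : 0 ≤ x) (m : ℕ) :
    x ^ m + m * x ^ (m - 1) ≤ (x + 1) ^ m := by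
  induction m with
  | zero => simp
  | succ m ih =>
    have hpred : (m : R) * x ^ (m - 1) * x = m * x ^ m := by
      cases m with
      | zero => simp
      | succ m => rw [Nat.add_sub_cancel, mul_assoc, ← pow_succ]
    calc x ^ (m + 1) + (m + 1 : ℕ) * x ^ (m + 1 - 1)
        ≤ x ^ (m + 1) + (m + 1 : ℕ) * x ^ m + m * x ^ (m - 1) := by
          simp only [Nat.add_sub_cancel]
          exact le_add_of_nonneg_right (by positivity)
      _ = (x ^ m + m * x ^ (m - 1)) * (x + 1) := by
          push_cast
          linear_combination hpred.symm
      _ ≤ (x + 1) ^ (m + 1) := by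
          rw [pow_succ]
          exact mul_le_mul_of_nonneg_right ih (add_nonneg hx zero_le_one)

theorem sum_Ico_mul_sub_le {c : ℕ → ℝ} {x y : ℝ} (hc₀ : ∀ h, 1 ≤ h → 0 ≤ c h)
    (hc : ∀ h, 1 ≤ h → c h ≤ x ^ (h - 1) * y ^ h) (h : ℕ) :
    ∑ i ∈ Ico 1 h, c (h - i) * c i ≤ (h - 1 : ℕ) * (x ^ (h - 2) * y ^ h) := by
  have hterm : ∀ i ∈ Ico 1 h, c (h - i) * c i ≤ x ^ (h - 2) * y ^ h := by
    intro i hi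
    obtain ⟨hi₁, hih⟩ := mem_Ico.mp hi
    calc c (h - i) * c i
        ≤ (x ^ (h - i - 1) * y ^ (h - i)) * (x ^ (i - 1) * y ^ i) :=
          mul_le_mul (hc _ (by omega)) (hc i hi₁) (hc₀ i hi₁)
            ((hc₀ _ (by omega)).trans (hc _ (by omega)))
      _ = x ^ (h - 2) * y ^ h := by
          rw [show h - 2 = (h - i - 1) + (i - 1) by omega,
            show h = (h - i) + i from (Nat.sub_add_cancel hih.le).symm, pow_add, pow_add]
          simp only [Nat.add_sub_cancel]
          ring
  simpa [Nat.card_Ico] using sum_le_card_nsmul _ _ _ hterm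

/-- One step of the recursion, with `x = k` and `y = γ ^ k`. -/
theorem le_of_quadratic_step {c c' : ℕ → ℝ} {γ x y : ℝ} (hγ : 1 ≤ γ) (hx : 0 ≤ x) (hy : 0 ≤ y)
    (hc₀ : ∀ h, 1 ≤ h → 0 ≤ c h) (hc : ∀ h, 1 ≤ h → c h ≤ x ^ (h - 1) * y ^ h)
    (hstep : ∀ h, 1 ≤ h → c' h = γ * c h + ∑ i ∈ Ico 1 h, c (h - i) * c i)
    (h : ℕ) (hh : 1 ≤ h) :
    c' h ≤ (x + 1) ^ (h - 1) * (γ * y) ^ h := by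
  have hγ₀ : 0 ≤ γ := zero_le_one.trans hγ
  have hbinom := pow_add_mul_pow_sub_one_le_add_one_pow hx (h - 1)
  rw [show h - 1 - 1 = h - 2 by omega] at hbinom
  calc c' h
      ≤ γ * (x ^ (h - 1) * y ^ h) + (h - 1 : ℕ) * (x ^ (h - 2) * y ^ h) := by
        rw [hstep h hh]
        exact add_le_add (mul_le_mul_of_nonneg_left (hc h hh) hγ₀) (sum_Ico_mul_sub_le hc₀ hc h)
    _ ≤ γ * ((x ^ (h - 1) + (h - 1 : ℕ) * x ^ (h - 2)) * y ^ h) := by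
        have : (h - 1 : ℕ) * (x ^ (h - 2) * y ^ h) ≤ γ * ((h - 1 : ℕ) * (x ^ (h - 2) * y ^ h)) :=
          le_mul_of_one_le_left (by positivity) hγ
        linarith
    _ ≤ γ ^ h * ((x + 1) ^ (h - 1) * y ^ h) := by
        gcongr
        exact le_self_pow₀ hγ (by omega)
    _ = (x + 1) ^ (h - 1) * (γ * y) ^ h := by ring

theorem nonneg_of_quadratic_recursion {γ : ℝ} {C : ℕ → ℕ → ℝ} (hγ : 0 ≤ γ)
    (h₀ : ∀ h, 1 ≤ h → 0 ≤ C 0 h)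
    (hrec : ∀ k h, 1 ≤ h →
      C (k + 1) h = γ * C k h + ∑ h₂ ∈ Ico 1 h, C k (h - h₂) * C k h₂) :
    ∀ k h, 1 ≤ h → 0 ≤ C k h := by
  intro k
  induction k with
  | zero => exact h₀
  | succ k ih =>
    intro h hh
    rw [hrec k h hh]
    refine add_nonneg (mul_nonneg hγ (ih h hh)) (sum_nonneg fun i hi => ?_)
    obtain ⟨hi₁, hih⟩ := mem_Ico.mp hi
    exact mul_nonneg (ih _ (by omega)) (ih i hi₁)

theorem stmt_7_general (γ : ℝ) (hγ : 1 ≤ γ) (C : ℕ → ℕ → ℝ)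
    (h01 : C 0 1 = 1) (h0h : ∀ h, 2 ≤ h → C 0 h = 0)
    (hrec : ∀ k h, 1 ≤ h →
      C (k + 1) h = γ * C k h + ∑ h₂ ∈ Finset.Ico 1 h, C k (h - h₂) * C k h₂) :
    ∀ k h : ℕ, 1 ≤ k → 1 ≤ h → C k h ≤ (k : ℝ) ^ (h - 1) * γ ^ (k * h) := by
  have hC₀ : ∀ h, 1 ≤ h → C 0 h = (0 : ℝ) ^ (h - 1) := by
    intro h hh
    obtain rfl | h2 : h = 1 ∨ 2 ≤ h := by omega
    · simp [h01]
    · simp [h0h h h2, zero_pow (show h - 1 ≠ 0 by omega)]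
  have hnonneg := nonneg_of_quadratic_recursion (zero_le_one.trans hγ)
    (fun h hh => (hC₀ h hh).symm ▸ pow_nonneg le_rfl _) hrec
  have hbound : ∀ k h, 1 ≤ h → C k h ≤ (k : ℝ) ^ (h - 1) * (γ ^ k) ^ h := by
    intro k
    induction k with
    | zero => simpa using fun h hh => (hC₀ h hh).le
    | succ k ih =>
      simpa [pow_succ, mul_comm γ] using
        le_of_quadratic_step hγ k.cast_nonneg (by positivity) (hnonneg k) ih (hrec k)
  intro k h _ hh
  simpa [pow_mul] using hbound k h hh

/-- Bound `C^h_k ≤ k^{h-1} γ^{kh}` for `γ ≥ 1` on the coefficients of the iterated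
quadratic recursion. -/
theorem stmt_7 (γ : ℝ) (hγ : 1 ≤ γ) (C : ℕ → ℕ → ℝ)
    (h01 : C 0 1 = 1) (h0h : ∀ h, 2 ≤ h → C 0 h = 0) (hz : ∀ k, C k 0 = 0)
    (hrec : ∀ k h, 1 ≤ h →
      C (k + 1) h = γ * C k h + ∑ h₂ ∈ Finset.Ico 1 h, C k (h - h₂) * C k h₂) :
    ∀ k h : ℕ, 1 ≤ k → 1 ≤ h → C k h ≤ (k : ℝ) ^ (h - 1) * γ ^ (k * h) :=
  stmt_7_general γ hγ C h01 h0h hrec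
end

section
/- Let 1/2 ≤ γ < 1 and let the coefficients C^h_k be defined by C^h_0 = 0 for h ≥ 2, C^1_0 = 1, and the recursion C^h_k = γ C^h_{k-1} + ∑_{h₂=1}^{h-1} C^{h-h₂}_{k-1} C^{h₂}_{k-1} (with C^h_k = 0 for h < 1). Then for all k ≥ 1 and h ≥ 1, C^h_k ≤ k^{h-1} γ^{k-1}. -/
open Finset

lemma stmt_8_binom_aux' : ∀ (s k : ℕ), k ^ (s+1) + (s+1) * k ^ s ≤ (k + 1) ^ (s+1) := by
  intro s
  induction s with
  | zero => intro k; simp [mul_comm]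
  | succ s ih =>
    intro k
    have h2 : (k ^ (s+1) + (s+1) * k ^ s) * (k + 1) ≤ (k + 1) ^ (s + 2) := by
      rw [pow_succ]
      exact Nat.mul_le_mul_right _ (ih k)
    have expand : (k ^ (s+1) + (s+1) * k ^ s) * (k + 1)
        = k ^ (s+2) + (s+2) * k ^ (s+1) + (s+1) * k ^ s := by ring
    rw [expand] at h2
    exact le_trans (Nat.le_add_right _ _) h2

/-- Binomial-type bound `k^m + m k^{m-1} ≤ (k+1)^m` over the naturals. -/
lemma stmt_8_binom_aux : ∀ (m k : ℕ), k ^ m + m * k ^ (m - 1) ≤ (k + 1) ^ m := by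
  intro m k
  match m with
  | 0 => simp
  | (s+1) => exact stmt_8_binom_aux' s k

/-- Bound `C^h_k ≤ k^{h-1} γ^{k-1}` for `1/2 ≤ γ < 1` on the coefficients of the iterated
quadratic recursion. -/
theorem stmt_8 (γ : ℝ) (hγ₁ : 1/2 ≤ γ) (hγ₂ : γ < 1) (C : ℕ → ℕ → ℝ)
    (h01 : C 0 1 = 1) (h0h : ∀ h, 2 ≤ h → C 0 h = 0) (hz : ∀ k, C k 0 = 0)
    (hrec : ∀ k h, 1 ≤ h →
      C (k + 1) h = γ * C k h + ∑ h₂ ∈ Finset.Ico 1 h, C k (h - h₂) * C k h₂) :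
    ∀ k h : ℕ, 1 ≤ k → 1 ≤ h → C k h ≤ (k : ℝ) ^ (h - 1) * γ ^ (k - 1) := by
  have hγ0 : (0:ℝ) ≤ γ := by linarith
  -- nonnegativity
  have hnn : ∀ k h, 0 ≤ C k h := by
    intro k
    induction k with
    | zero =>
      intro h
      match h with
      | 0 => rw [hz]
      | 1 => rw [h01]; norm_num
      | (n+2) => rw [h0h (n+2) (by omega)]
    | succ k ih =>
      intro h
      match h with
      | 0 => rw [hz]
      | (n+1) =>
        rw [hrec k (n+1) (by omega)]
        have h1 : 0 ≤ γ * C k (n+1) := mul_nonneg hγ0 (ih _)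
        have h2 : 0 ≤ ∑ h₂ ∈ Finset.Ico 1 (n+1), C k (n+1 - h₂) * C k h₂ :=
          Finset.sum_nonneg fun i _ => mul_nonneg (ih _) (ih _)
        linarith
  -- values of `C 0`
  have c0' : ∀ j, j ≠ 1 → C 0 j = 0 := by
    intro j hj
    match j with
    | 0 => exact hz 0
    | 1 => exact absurd rfl hj
    | (n+2) => exact h0h (n+2) (by omega)
  -- values of `C 1`
  have c1 : ∀ j, C 1 j = if j = 1 then γ else if j = 2 then 1 else 0 := by
    intro j
    match j with
    | 0 => simpa using hz 1
    | 1 =>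
      rw [show (1:ℕ) = 0 + 1 from rfl, hrec 0 1 (by omega)]
      simp [h01]
    | 2 =>
      rw [show (1:ℕ) = 0 + 1 from rfl, hrec 0 2 (by omega)]
      rw [show Finset.Ico 1 2 = {1} from rfl]
      simp [h01, h0h 2 (by omega)]
    | (n+3) =>
      rw [show (1:ℕ) = 0 + 1 from rfl, hrec 0 (n+3) (by omega)]
      have hs : ∑ h₂ ∈ Finset.Ico 1 (n+3), C 0 (n+3 - h₂) * C 0 h₂ = 0 := by
        apply Finset.sum_eq_zero
        intro i hi
        simp only [Finset.mem_Ico] at hi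
        rcases eq_or_ne i 1 with rfl | hi1
        · rw [c0' (n+3-1) (by omega)]; ring
        · rw [c0' i hi1]; ring
      rw [hs, c0' (n+3) (by omega)]
      simp
  -- base case k = 1 : C 1 h ≤ 1
  have base1 : ∀ h, 1 ≤ h → C 1 h ≤ (1:ℝ) ^ (h-1) * γ ^ (1-1) := by
    intro h hh
    rw [c1 h]
    have he : (1:ℝ) ^ (h-1) * γ ^ (1-1) = 1 := by norm_num
    rw [he]
    split
    · linarith
    · split
      · exact le_refl 1
      · norm_num
  -- base case k = 2 : C 2 h ≤ 2^(h-1) * γ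
  have base2 : ∀ h, 1 ≤ h → C 2 h ≤ (2:ℝ) ^ (h-1) * γ ^ (2-1) := by
    intro h hh
    match h, hh with
    | 1, _ =>
      rw [show (2:ℕ) = 1 + 1 from rfl, hrec 1 1 (by omega)]
      simp [c1 1]
      nlinarith
    | 2, _ =>
      rw [show (2:ℕ) = 1 + 1 from rfl, hrec 1 2 (by omega)]
      rw [show Finset.Ico 1 2 = {1} from rfl]
      simp [c1]
      nlinarith
    | 3, _ =>
      rw [show (2:ℕ) = 1 + 1 from rfl, hrec 1 3 (by omega)]
      rw [show Finset.Ico 1 3 = {1, 2} from rfl]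
      simp [c1]
      nlinarith
    | 4, _ =>
      rw [show (2:ℕ) = 1 + 1 from rfl, hrec 1 4 (by omega)]
      rw [show Finset.Ico 1 4 = {1, 2, 3} from rfl]
      simp [c1]
      nlinarith
    | (n+5), _ =>
      rw [show (2:ℕ) = 1 + 1 from rfl, hrec 1 (n+5) (by omega)]
      have hs : ∑ h₂ ∈ Finset.Ico 1 (n+5), C 1 (n+5 - h₂) * C 1 h₂ = 0 := by
        apply Finset.sum_eq_zero
        intro i hi
        simp only [Finset.mem_Ico] at hi
        by_cases h1 : i ≤ 2
        · rw [c1 (n+5-i)]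
          have e1 : n+5-i ≠ 1 := by omega
          have e2 : n+5-i ≠ 2 := by omega
          simp [e1, e2]
        · rw [c1 i]
          have e1 : i ≠ 1 := by omega
          have e2 : i ≠ 2 := by omega
          simp [e1, e2]
      rw [hs, c1 (n+5)]
      have e1 : n+5 ≠ 1 := by omega
      have e2 : n+5 ≠ 2 := by omega
      simp only [e1, e2, if_false]
      have hp : (0:ℝ) < (2:ℝ) ^ (n+5-1) := by positivity
      have : γ * 0 + 0 = 0 := by ring
      rw [this]
      have : (0:ℝ) ≤ γ ^ (2-1) := by positivity
      nlinarith
  -- main induction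
  suffices H : ∀ k, 1 ≤ k → ∀ h, 1 ≤ h → C k h ≤ (k : ℝ) ^ (h - 1) * γ ^ (k - 1) from
    fun k h hk hh => H k hk h hh
  intro k hk
  induction k, hk using Nat.le_induction with
  | base => exact fun h hh => by simpa using base1 h hh
  | succ k hk ih =>
    intro h hh
    rcases eq_or_lt_of_le hk with rfl | hk2
    · simpa using base2 h hh
    -- now k ≥ 2
    have hk2' : 2 ≤ k := hk2
    rw [hrec k h hh]
    -- bound the sum
    have hsum : ∑ h₂ ∈ Finset.Ico 1 h, C k (h - h₂) * C k h₂
        ≤ (h - 1 : ℕ) * ((k:ℝ) ^ (h-2) * γ ^ (k-1) * γ ^ (k-1)) := by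
      have hb : ∀ i ∈ Finset.Ico 1 h, C k (h - i) * C k i
          ≤ (k:ℝ) ^ (h-2) * γ ^ (k-1) * γ ^ (k-1) := by
        intro i hi
        simp only [Finset.mem_Ico] at hi
        have b1 := ih (h - i) (by omega)
        have b2 := ih i hi.1
        have hmul : C k (h - i) * C k i
            ≤ ((k:ℝ) ^ (h-i-1) * γ ^ (k-1)) * ((k:ℝ) ^ (i-1) * γ ^ (k-1)) :=
          mul_le_mul b1 b2 (hnn k i) (by positivity)
        refine hmul.trans (le_of_eq ?_)
        have hexp : (h - i - 1) + (i - 1) = h - 2 := by omega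
        rw [show ((k:ℝ) ^ (h-i-1) * γ ^ (k-1)) * ((k:ℝ) ^ (i-1) * γ ^ (k-1))
            = (k:ℝ) ^ (h-i-1) * (k:ℝ) ^ (i-1) * γ ^ (k-1) * γ ^ (k-1) from by ring,
          ← pow_add, hexp]
      calc ∑ h₂ ∈ Finset.Ico 1 h, C k (h - h₂) * C k h₂
          ≤ ∑ _h₂ ∈ Finset.Ico 1 h, (k:ℝ) ^ (h-2) * γ ^ (k-1) * γ ^ (k-1) :=
            Finset.sum_le_sum hb
        _ = (h - 1 : ℕ) * ((k:ℝ) ^ (h-2) * γ ^ (k-1) * γ ^ (k-1)) := by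
            rw [Finset.sum_const, Nat.card_Ico]
            simp
    have hCk := ih h hh
    -- γ^(k-1) * γ^(k-1) ≤ γ^k  since k ≥ 2 and γ ≤ 1
    have hγpow : γ ^ (k-1) * γ ^ (k-1) ≤ γ ^ k := by
      rw [← pow_add]
      apply pow_le_pow_of_le_one hγ0 (le_of_lt hγ₂)
      omega
    have hγk : γ * γ ^ (k-1) = γ ^ k := by
      rw [← pow_succ']
      congr 1
      omega
    have hbin : (k:ℝ) ^ (h-1) + (h-1:ℕ) * (k:ℝ) ^ (h-2) ≤ ((k:ℝ) + 1) ^ (h-1) := by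
      have := stmt_8_binom_aux (h-1) k
      have hcast : ((k ^ (h-1) + (h-1) * k ^ (h-1-1) : ℕ) : ℝ)
          ≤ (((k+1) ^ (h-1) : ℕ) : ℝ) := by exact_mod_cast this
      push_cast at hcast
      have : h - 1 - 1 = h - 2 := by omega
      rw [this] at hcast
      exact hcast
    have hγkpos : (0:ℝ) ≤ γ ^ k := by positivity
    have hkpow2 : (0:ℝ) ≤ (k:ℝ) ^ (h-2) := by positivity
    have hhm1 : (0:ℝ) ≤ ((h-1:ℕ):ℝ) := Nat.cast_nonneg _
    calc γ * C k h + ∑ h₂ ∈ Finset.Ico 1 h, C k (h - h₂) * C k h₂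
        ≤ γ * ((k:ℝ) ^ (h-1) * γ ^ (k-1))
            + (h - 1 : ℕ) * ((k:ℝ) ^ (h-2) * (γ ^ (k-1) * γ ^ (k-1))) := by
          have := mul_le_mul_of_nonneg_left hCk hγ0
          have h2 : ((h-1:ℕ):ℝ) * ((k:ℝ) ^ (h-2) * γ ^ (k-1) * γ ^ (k-1))
              = (h - 1 : ℕ) * ((k:ℝ) ^ (h-2) * (γ ^ (k-1) * γ ^ (k-1))) := by ring
          rw [h2] at hsum
          linarith
      _ ≤ (k:ℝ) ^ (h-1) * γ ^ k + (h - 1 : ℕ) * ((k:ℝ) ^ (h-2) * γ ^ k) := by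
          have e1 : γ * ((k:ℝ) ^ (h-1) * γ ^ (k-1)) = (k:ℝ) ^ (h-1) * γ ^ k := by
            rw [← hγk]; ring
          rw [e1]
          have e2 : (k:ℝ) ^ (h-2) * (γ ^ (k-1) * γ ^ (k-1)) ≤ (k:ℝ) ^ (h-2) * γ ^ k :=
            mul_le_mul_of_nonneg_left hγpow hkpow2
          have e3 := mul_le_mul_of_nonneg_left e2 hhm1
          linarith
      _ = ((k:ℝ) ^ (h-1) + (h-1:ℕ) * (k:ℝ) ^ (h-2)) * γ ^ k := by ring
      _ ≤ ((k:ℝ) + 1) ^ (h-1) * γ ^ k := mul_le_mul_of_nonneg_right hbin hγkpos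
      _ = ((k+1:ℕ):ℝ) ^ (h-1) * γ ^ ((k+1) - 1) := by push_cast; norm_num
end

section
/- Fix constants e₁, e₂, e₃ ≥ 0 and L_I ≥ 0. For each natural number N define L^{N,0} = L_I and L^{N,k} = L^{N,k-1}(1 + e₁/2^N) + (e₂/2^N)(L^{N,k-1})² + e₃/2^N for k = 1, ..., 2^N. Then L^{N+1,2k} ≥ L^{N,k} for all k = 0, 1, ..., 2^N; in particular, the sequence N ↦ L^{N,2^N} is nondecreasing. -/
lemma key_step (x y z a b : ℝ) (hx : 0 ≤ x) (hy : 0 ≤ y) (hz : 0 ≤ z)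
    (ha : 0 ≤ a) (hab : a ≤ b) :
    a * (1 + 2 * x) + 2 * y * a ^ 2 + 2 * z ≤
      (b * (1 + x) + y * b ^ 2 + z) * (1 + x) +
        y * (b * (1 + x) + y * b ^ 2 + z) ^ 2 + z := by
  set y1 := b * (1 + x) + y * b ^ 2 + z with hy1
  have hb : 0 ≤ b := ha.trans hab
  have hsq : a ^ 2 ≤ b ^ 2 := by nlinarith
  have h1 : a + (x * a + y * a ^ 2 + z) ≤ y1 := by nlinarith [mul_le_mul_of_nonneg_left hsq hy, mul_le_mul_of_nonneg_left hab hx]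
  have ha1 : a ≤ y1 := by nlinarith
  have h2 : a ^ 2 ≤ y1 ^ 2 := by nlinarith
  nlinarith [mul_le_mul_of_nonneg_left ha1 hx, mul_le_mul_of_nonneg_left h2 hy]

/-- Monotonicity of the Lipschitz-constant recursion under halving the step size:
with `L^{N,0} = L_I` and `L^{N,k} = L^{N,k-1}(1 + e₁/2^N) + (e₂/2^N)(L^{N,k-1})² + e₃/2^N`,
one has `L^{N+1,2k} ≥ L^{N,k}` for `0 ≤ k ≤ 2^N`; in particular `N ↦ L^{N,2^N}` is
nondecreasing. -/
theorem stmt_10 (e₁ e₂ e₃ LI : ℝ) (he₁ : 0 ≤ e₁) (he₂ : 0 ≤ e₂) (he₃ : 0 ≤ e₃)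
    (hLI : 0 ≤ LI) (L : ℕ → ℕ → ℝ)
    (h0 : ∀ N, L N 0 = LI)
    (hrec : ∀ N k : ℕ,
      L N (k + 1) = L N k * (1 + e₁ / 2 ^ N) + (e₂ / 2 ^ N) * (L N k) ^ 2 + e₃ / 2 ^ N) :
    (∀ N : ℕ, ∀ k ≤ 2 ^ N, L N k ≤ L (N + 1) (2 * k)) ∧
      Monotone (fun N : ℕ => L N (2 ^ N)) := by
  have hpow : ∀ N : ℕ, (0:ℝ) < 2 ^ N := fun N => by positivity
  have hnn : ∀ N k, 0 ≤ L N k := by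
    intro N k
    induction k with
    | zero => rw [h0]; exact hLI
    | succ k ih =>
      rw [hrec]
      have h1 : (0:ℝ) ≤ e₁ / 2 ^ N := by positivity
      have h2 : (0:ℝ) ≤ e₂ / 2 ^ N := by positivity
      have h3 : (0:ℝ) ≤ e₃ / 2 ^ N := by positivity
      nlinarith [sq_nonneg (L N k), mul_nonneg h2 (sq_nonneg (L N k))]
  have main : ∀ N k : ℕ, L N k ≤ L (N + 1) (2 * k) := by
    intro N k
    induction k with
    | zero => rw [Nat.mul_zero, h0, h0]
    | succ k ih =>
      have h2k : 2 * (k + 1) = 2 * k + 1 + 1 := by ring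
      rw [h2k, hrec, hrec, hrec]
      have hd : (2:ℝ) ^ (N + 1) = 2 * 2 ^ N := by ring
      have he : ∀ e : ℝ, e / 2 ^ N = 2 * (e / 2 ^ (N + 1)) := by
        intro e; rw [hd]; field_simp
      rw [he e₁, he e₂, he e₃]
      have hx : 0 ≤ e₁ / 2 ^ (N + 1) := by positivity
      have hy : 0 ≤ e₂ / 2 ^ (N + 1) := by positivity
      have hz : 0 ≤ e₃ / 2 ^ (N + 1) := by positivity
      have := key_step (e₁ / 2 ^ (N + 1)) (e₂ / 2 ^ (N + 1)) (e₃ / 2 ^ (N + 1))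
        (L N k) (L (N + 1) (2 * k)) hx hy hz (hnn N k) ih
      linarith [this]
  refine ⟨fun N k _ => main N k, monotone_nat_of_le_succ fun N => ?_⟩
  have := main N (2 ^ N)
  simpa [pow_succ, Nat.mul_comm] using this
end

section
/- Let m ≥ 2 and n ≥ 1 be integers, and L_C, L_D, L_I ≥ 0 with L_C > 0. Set c₁ = n L_D - (m-1) L_C and suppose α > 0 satisfies α < 1/(exp(max(c₁,0) α) · n(m-1) L_C (L_I + 1/n)). For each N, define L^{N,0} = L_I and L^{N,k} = L^{N,k-1}(1 + ((m-1)L_C + n L_D) α/2^N) + n(m-1)L_C (α/2^N)(L^{N,k-1})² + L_D α/2^N for k = 1, ..., 2^N. Then for all N and all 0 ≤ k ≤ 2^N, L^{N,k} ≤ (L_I + 1/n) exp(c₁ α)/(1 - n(m-1)L_C α (L_I + 1/n) exp(max(c₁,0) α)) - 1/n. -/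
set_option maxHeartbeats 1000000 in
/-- Local boundedness of the Lipschitz constants `L^{N,k}` (relations 3.34 and 3.47):
under the locality condition on `α`, for all `N` and all `0 ≤ k ≤ 2^N`,
`L^{N,k} ≤ (L_I + 1/n) exp(c₁ α)/(1 - n(m-1)L_C α (L_I + 1/n) exp(max(c₁,0) α)) - 1/n`. -/
theorem stmt_11 (m n : ℕ) (hm : 2 ≤ m) (hn : 1 ≤ n)
    (LC LD LI : ℝ) (hLC : 0 < LC) (hLD : 0 ≤ LD) (hLI : 0 ≤ LI)
    (c₁ α : ℝ) (hc₁ : c₁ = n * LD - ((m : ℝ) - 1) * LC) (hα : 0 < α)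
    (hloc : α < 1 / (Real.exp (max c₁ 0 * α) * (n * ((m : ℝ) - 1) * LC * (LI + 1 / n))))
    (L : ℕ → ℕ → ℝ) (h0 : ∀ N, L N 0 = LI)
    (hrec : ∀ N k : ℕ,
      L N (k + 1) = L N k * (1 + (((m : ℝ) - 1) * LC + n * LD) * (α / 2 ^ N))
        + n * ((m : ℝ) - 1) * LC * (α / 2 ^ N) * (L N k) ^ 2 + LD * (α / 2 ^ N)) :
    ∀ N : ℕ, ∀ k ≤ 2 ^ N,
      L N k ≤ (LI + 1 / n) * Real.exp (c₁ * α) /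
          (1 - n * ((m : ℝ) - 1) * LC * α * (LI + 1 / n) * Real.exp (max c₁ 0 * α))
        - 1 / n := by
  intro N
  have hn0 : (0:ℝ) < (n:ℝ) := by exact_mod_cast Nat.pos_of_ne_zero (by omega)
  have hn0' : ((n:ℝ)) ≠ 0 := ne_of_gt hn0
  have hm1 : (1:ℝ) ≤ (m:ℝ) - 1 := by
    have : (2:ℝ) ≤ (m:ℝ) := by exact_mod_cast hm
    linarith
  set β : ℝ := (n:ℝ) * ((m:ℝ) - 1) * LC with hβdef
  have hβ : 0 < β := by
    have h1 : (1:ℝ) ≤ (n:ℝ) := by exact_mod_cast hn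
    exact mul_pos (mul_pos (lt_of_lt_of_le one_pos h1) (lt_of_lt_of_le one_pos hm1)) hLC
  set h : ℝ := α / 2 ^ N with hhdef
  have h2N : (0:ℝ) < 2 ^ N := by positivity
  have hh : 0 < h := by positivity
  have h2N1 : (1:ℝ) ≤ 2 ^ N := one_le_pow₀ (by norm_num)
  have hhK : h * 2 ^ N = α := by rw [hhdef]; field_simp
  have hh2 : h ≤ α := by
    rw [hhdef, div_le_iff₀ h2N]
    nlinarith
  set E : ℝ := Real.exp (max c₁ 0 * α) with hEdef
  have hE1 : (1:ℝ) ≤ E := Real.one_le_exp (by positivity)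
  have hIpos : (0:ℝ) < LI + 1 / n := by positivity
  set D : ℝ := β * α * (LI + 1 / n) * E with hDdef
  have hD0 : 0 < D := by positivity
  have hD1 : D < 1 := by
    have hX : (0:ℝ) < E * (β * (LI + 1 / n)) := by positivity
    have := (lt_div_iff₀ hX).mp hloc
    nlinarith
  have hLnn : ∀ k, 0 ≤ L N k := by
    intro k
    induction k with
    | zero => rw [h0]; exact hLI
    | succ k ih =>
      rw [hrec N k]
      have hαh : (0:ℝ) ≤ α / 2 ^ N := by positivity
      have t0 : (0:ℝ) ≤ (((m:ℝ) - 1) * LC + n * LD) := by nlinarith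
      have t1 : (0:ℝ) ≤ L N k * (1 + (((m:ℝ) - 1) * LC + n * LD) * (α / 2 ^ N)) := by
        apply mul_nonneg ih
        nlinarith [mul_nonneg t0 hαh]
      have t2 : (0:ℝ) ≤ β * (α / 2 ^ N) * (L N k) ^ 2 := by positivity
      have t3 : (0:ℝ) ≤ LD * (α / 2 ^ N) := mul_nonneg hLD hαh
      linarith
  set b : ℕ → ℝ := fun k => β * h * (L N k + 1 / n) with hbdef
  have hbpos : ∀ k, 0 < b k := by
    intro k; have := hLnn k; simp only [hbdef]; positivity
  have hb0 : b 0 = β * h * (LI + 1 / n) := by simp [hbdef, h0]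
  set γ : ℝ := 1 + c₁ * h with hγdef
  have hbrec : ∀ k, b (k + 1) = γ * b k + (b k) ^ 2 := by
    intro k
    simp only [hbdef, hγdef, hβdef, hhdef]
    rw [hrec N k, hc₁]
    field_simp
    ring
  have hb0c : -(c₁ * h) ≤ b 0 := by
    rw [hb0]
    have e1 : β * h * (LI + 1/n) = β * h * LI + ((m:ℝ)-1)*LC*h := by
      rw [hβdef]; field_simp
    have e2 : -(c₁*h) = ((m:ℝ)-1)*LC*h - (n:ℝ)*LD*h := by rw [hc₁]; ring
    rw [e1, e2]
    have t1 : (0:ℝ) ≤ β * h * LI := by positivity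
    have t2 : (0:ℝ) ≤ (n:ℝ)*LD*h := by positivity
    linarith
  have hb0lt1 : b 0 < 1 := by
    have h1 : b 0 ≤ β * α * (LI + 1/n) := by
      rw [hb0]
      exact mul_le_mul_of_nonneg_right (mul_le_mul_of_nonneg_left hh2 hβ.le) hIpos.le
    have h2 : β * α * (LI + 1/n) ≤ D := by
      rw [hDdef]
      exact le_mul_of_one_le_right (by positivity) hE1
    linarith
  have hγpos : 0 < γ := by
    rw [hγdef]; linarith [hb0c, hb0lt1]
  set S : ℕ → ℝ := fun k => ∑ j ∈ Finset.range k, γ ^ j with hSdef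
  have hSgeom : ∀ k, c₁ * h * S k = γ ^ k - 1 := by
    intro k
    have hgm := geom_sum_mul γ k
    have hγ1 : γ - 1 = c₁ * h := by rw [hγdef]; ring
    rw [hγ1] at hgm
    simp only [hSdef]
    linarith [hgm]
  have hSsucc : ∀ k, S (k + 1) = S k + γ ^ k := by
    intro k; simp [hSdef, Finset.sum_range_succ]
  have hSnn : ∀ k, 0 ≤ S k := by
    intro k; apply Finset.sum_nonneg; intro j _; positivity
  have hγpow : ∀ j : ℕ, j ≤ 2 ^ N → γ ^ j ≤ E := by
    intro j hj
    have h1 : γ ≤ Real.exp (max c₁ 0 * h) := by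
      calc γ = c₁ * h + 1 := by rw [hγdef]; ring
        _ ≤ max c₁ 0 * h + 1 := by nlinarith [le_max_left c₁ 0]
        _ ≤ Real.exp (max c₁ 0 * h) := Real.add_one_le_exp _
    calc γ ^ j ≤ Real.exp (max c₁ 0 * h) ^ j := pow_le_pow_left₀ hγpos.le h1 j
      _ = Real.exp ((j:ℝ) * (max c₁ 0 * h)) := (Real.exp_nat_mul _ j).symm
      _ ≤ E := by
          rw [hEdef]
          apply Real.exp_le_exp.mpr
          have hj' : (j:ℝ) ≤ 2 ^ N := by exact_mod_cast hj
          calc (j:ℝ) * (max c₁ 0 * h) ≤ (2^N : ℝ) * (max c₁ 0 * h) :=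
                mul_le_mul_of_nonneg_right hj' (by positivity)
            _ = max c₁ 0 * (h * 2^N) := by ring
            _ = max c₁ 0 * α := by rw [hhK]
  have hSleE : ∀ k : ℕ, k ≤ 2 ^ N → b 0 * S k ≤ D := by
    intro k hk
    have h1 : S k ≤ (k:ℝ) * E := by
      calc S k ≤ ∑ _j ∈ Finset.range k, E := by
            apply Finset.sum_le_sum
            intro j hj
            exact hγpow j (le_trans (le_of_lt (Finset.mem_range.mp hj)) hk)
        _ = (k:ℝ) * E := by simp [mul_comm]
    have h2 : b 0 * S k ≤ b 0 * ((k:ℝ) * E) :=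
      mul_le_mul_of_nonneg_left h1 (hbpos 0).le
    have h3 : b 0 * ((k:ℝ) * E) ≤ b 0 * ((2^N:ℝ) * E) := by
      have hk' : (k:ℝ) ≤ (2^N : ℝ) := by exact_mod_cast hk
      have := mul_le_mul_of_nonneg_right hk' (le_trans zero_le_one hE1)
      nlinarith [hbpos 0]
    have h4 : b 0 * ((2^N:ℝ) * E) = D := by
      rw [hb0, hDdef, ← hhK]; ring
    linarith
  have hdpos : ∀ k : ℕ, k ≤ 2 ^ N → 0 < 1 - b 0 * S k := by
    intro k hk; have := hSleE k hk; linarith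
  -- main induction: multiplied form of b k ≤ b 0 γ^k / (1 - b 0 S k)
  have main : ∀ k : ℕ, k ≤ 2 ^ N → b k * (1 - b 0 * S k) ≤ b 0 * γ ^ k := by
    intro k
    induction k with
    | zero => intro _; simp [hSdef]
    | succ k ih =>
      intro hk1
      have hk : k ≤ 2 ^ N := by omega
      have ih' := ih hk
      have hd := hdpos k hk
      have hd' := hdpos (k+1) hk1
      have hg : (0:ℝ) < γ ^ k := pow_pos hγpos k
      have hbk := hbpos k
      have hb0p := hbpos 0
      set d : ℝ := 1 - b 0 * S k with hd_def
      set a : ℝ := b 0 * γ ^ k with ha_def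
      have hA : 0 < a := by positivity
      have hbk_le : b k ≤ a / d := by
        rw [le_div_iff₀ hd]; exact ih'
      have hd'eq : 1 - b 0 * S (k+1) = d - a := by
        rw [hSsucc k, hd_def, ha_def]; ring
      have hd'pos : 0 < d - a := by rw [← hd'eq]; exact hd'
      have step1 : b (k+1) ≤ γ * (a/d) + (a/d)^2 := by
        rw [hbrec k]
        have hq : (0:ℝ) ≤ a/d + b k := by positivity
        have e1 : γ * b k ≤ γ * (a/d) := mul_le_mul_of_nonneg_left hbk_le hγpos.le
        have e2 : b k ^ 2 ≤ (a/d)^2 := pow_le_pow_left₀ hbk.le hbk_le 2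
        linarith
      have hγ1 : γ - 1 = c₁ * h := by rw [hγdef]; ring
      have hkey : 0 ≤ (γ - 1) * d + a := by
        have e : (γ - 1) * d + a = c₁ * h + b 0 := by
          rw [hd_def, ha_def]
          linear_combination (1 - b 0 * S k) * hγ1 - (b 0) * hSgeom k
        rw [e]; linarith [hb0c]
      have step2 : γ * (a/d) + (a/d)^2 ≤ b 0 * γ ^ (k+1) / (d - a) := by
        have heq : γ * (a/d) + (a/d)^2 = (γ * a * d + a^2) / d^2 := by
          field_simp
        rw [heq, div_le_div_iff₀ (by positivity) hd'pos]
        have hexp : b 0 * γ ^ (k+1) * d ^ 2 - (γ * a * d + a ^ 2) * (d - a)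
            = a ^ 2 * ((γ - 1) * d + a) := by
          rw [ha_def, pow_succ]; ring
        linarith [hexp, mul_nonneg (sq_nonneg a) hkey]
      have hfinal : b (k+1) ≤ b 0 * γ ^ (k+1) / (d - a) := le_trans step1 step2
      rw [hd'eq]
      calc b (k+1) * (d - a) ≤ (b 0 * γ ^ (k+1) / (d - a)) * (d - a) :=
            mul_le_mul_of_nonneg_right hfinal hd'pos.le
        _ = b 0 * γ ^ (k+1) := by field_simp
  -- final bound
  intro k hk
  have hd := hdpos k hk
  have hDden : (0:ℝ) < 1 - D := by linarith
  have hgk : (0:ℝ) < γ ^ k := pow_pos hγpos k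
  have hcomp : γ ^ k * (1 - D) ≤ Real.exp (c₁ * α) * (1 - b 0 * S k) := by
    rcases le_or_gt 0 c₁ with hc | hc
    · have hmax : max c₁ 0 = c₁ := max_eq_left hc
      have h1 : γ ^ k ≤ Real.exp (c₁ * α) := by
        have := hγpow k hk
        rw [hEdef, hmax] at this
        exact this
      have h2 : 1 - D ≤ 1 - b 0 * S k := by linarith [hSleE k hk]
      calc γ ^ k * (1 - D) ≤ Real.exp (c₁ * α) * (1 - D) :=
            mul_le_mul_of_nonneg_right h1 hDden.le
        _ ≤ Real.exp (c₁ * α) * (1 - b 0 * S k) :=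
            mul_le_mul_of_nonneg_left h2 (Real.exp_pos _).le
    · have hmax : max c₁ 0 = 0 := max_eq_right hc.le
      have hγle1 : γ ≤ 1 := by rw [hγdef]; nlinarith
      have hE' : E = 1 := by rw [hEdef, hmax]; simp
      have hDK : D = b 0 * (2^N : ℝ) := by
        rw [hDdef, hE', hb0, ← hhK]; ring
      have h1 : γ ^ (2^N : ℕ) ≤ Real.exp (c₁ * α) := by
        have hγe : γ ≤ Real.exp (c₁ * h) := by
          have := Real.add_one_le_exp (c₁ * h); rw [hγdef]; linarith
        calc γ ^ (2^N:ℕ) ≤ Real.exp (c₁ * h) ^ (2^N:ℕ) :=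
              pow_le_pow_left₀ hγpos.le hγe _
          _ = Real.exp (((2^N:ℕ):ℝ) * (c₁ * h)) := (Real.exp_nat_mul _ _).symm
          _ = Real.exp (c₁ * α) := by
              congr 1
              push_cast
              rw [← hhK]; ring
      have hSk_le : S k ≤ (k:ℝ) := by
        calc S k ≤ ∑ _j ∈ Finset.range k, (1:ℝ) := by
              apply Finset.sum_le_sum
              intro j _; exact pow_le_one₀ hγpos.le hγle1
          _ = (k:ℝ) := by simp
      have hSk'_le : S (2^N - k) ≤ ((2:ℝ)^N - (k:ℝ)) := by
        have h5 : S (2^N - k) ≤ ((2^N - k : ℕ) : ℝ) := by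
          calc S (2^N - k) ≤ ∑ _j ∈ Finset.range (2^N - k), (1:ℝ) := by
                apply Finset.sum_le_sum
                intro j _; exact pow_le_one₀ hγpos.le hγle1
            _ = ((2^N - k : ℕ):ℝ) := by simp
        have hcast : ((2^N - k : ℕ):ℝ) = (2:ℝ)^N - (k:ℝ)  := by
          rw [Nat.cast_sub hk]; push_cast; ring
        linarith [hcast ▸ h5]
      have hkey2 : 1 - b 0 * (2^N:ℝ) ≤ γ ^ (2^N - k : ℕ) * (1 - b 0 * S k) := by
        have hid : γ ^ (2^N - k : ℕ) = 1 + c₁ * h * S (2^N - k) := by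
          have := hSgeom (2^N - k); linarith
        rw [hid]
        have hS' := hSnn (2^N - k)
        have hSk := hSnn k
        have hb0p := (hbpos 0).le
        have h2 : 0 ≤ (b 0 + c₁ * h) * S (2^N - k) * (1 - b 0 * S k) :=
          mul_nonneg (mul_nonneg (by linarith [hb0c]) hS') hd.le
        have h3 : (0:ℝ) ≤ (2:ℝ)^N - S (2^N - k) - S k := by linarith
        have h4 : 0 ≤ b 0 * ((2:ℝ)^N - S (2^N - k) - S k) := mul_nonneg hb0p h3
        have h5 : 0 ≤ b 0 * b 0 * (S (2^N - k) * S k) :=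
          mul_nonneg (mul_nonneg hb0p hb0p) (mul_nonneg hS' hSk)
        nlinarith [h2, h4, h5]
      have hpowsplit : γ ^ k * γ ^ (2^N - k : ℕ) = γ ^ (2^N : ℕ) := by
        rw [← pow_add]
        congr 1
        omega
      calc γ ^ k * (1 - D) = γ ^ k * (1 - b 0 * (2^N:ℝ)) := by rw [hDK]
        _ ≤ γ ^ k * (γ ^ (2^N - k : ℕ) * (1 - b 0 * S k)) :=
            mul_le_mul_of_nonneg_left hkey2 hgk.le
        _ = γ ^ (2^N:ℕ) * (1 - b 0 * S k) := by rw [← hpowsplit]; ring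
        _ ≤ Real.exp (c₁ * α) * (1 - b 0 * S k) :=
            mul_le_mul_of_nonneg_right h1 hd.le
  -- assemble
  have hmain := main k hk
  have s3 : b k * (1 - D) * (1 - b 0 * S k) ≤ b 0 * Real.exp (c₁ * α) * (1 - b 0 * S k) := by
    calc b k * (1 - D) * (1 - b 0 * S k) = b k * (1 - b 0 * S k) * (1 - D) := by ring
      _ ≤ b 0 * γ ^ k * (1 - D) := mul_le_mul_of_nonneg_right hmain hDden.le
      _ = b 0 * (γ ^ k * (1 - D)) := by ring
      _ ≤ b 0 * (Real.exp (c₁ * α) * (1 - b 0 * S k)) :=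
          mul_le_mul_of_nonneg_left hcomp (hbpos 0).le
      _ = b 0 * Real.exp (c₁ * α) * (1 - b 0 * S k) := by ring
  have s4 : b k * (1 - D) ≤ b 0 * Real.exp (c₁ * α) := le_of_mul_le_mul_right s3 hd
  have s5 : b k ≤ b 0 * Real.exp (c₁ * α) / (1 - D) := (le_div_iff₀ hDden).mpr s4
  have s6 : β * h * (L N k + 1/n) ≤ β * h * ((LI + 1/n) * Real.exp (c₁ * α) / (1 - D)) := by
    calc β * h * (L N k + 1/n) = b k := rfl
      _ ≤ b 0 * Real.exp (c₁ * α) / (1 - D) := s5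
      _ = β * h * ((LI + 1/n) * Real.exp (c₁ * α) / (1 - D)) := by rw [hb0]; ring
  have s7 : L N k + 1/n ≤ (LI + 1/n) * Real.exp (c₁ * α) / (1 - D) :=
    le_of_mul_le_mul_left s6 (by positivity)
  linarith
end

section
/- Let f(t,y) be continuous and bounded by M on R, with the partitioned bounds y^{N,k}_{i,m} and y^{N,k}_{i,M} defined recursively by y^{N,k}_{i,m} = y^{N,k-1}_{i,m} + m^{N,k}_{f_i} α/2^N and y^{N,k}_{i,M} = y^{N,k-1}_{i,M} + M^{N,k}_{f_i} α/2^N, where M^{N,k}_{f_i} and m^{N,k}_{f_i} are the max and min of f_i over R^{N,k} = {(t,y) : (k-1)α/2^N ≤ t - t₀ ≤ kα/2^N, y^{N,k-1}_{i,m} - M α/2^N ≤ y_i ≤ y^{N,k-1}_{i,M} + M α/2^N}, with y^{N,0}_{i,m} = y^{N,0}_{i,M} = y_{0i}. Then the bounds are nested under refinement: for all N and k = 0, 1, ..., 2^N, y^{N+1,2k}_{i,m} ≥ y^{N,k}_{i,m} and y^{N+1,2k}_{i,M} ≤ y^{N,k}_{i,M}. -/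
open Set

/-- The region `R^{N,k+1}` of relation 2.5.1 (indexed here by the lower step `k`):
times `t` with `k α/2^N ≤ t - t₀ ≤ (k+1) α/2^N` and values `y` within `M α/2^N` of the
current bounds. -/
def odeRegion (n : ℕ) (t₀ α M : ℝ) (ym yM : ℕ → ℕ → Fin n → ℝ) (N k : ℕ) :
    Set (ℝ × (Fin n → ℝ)) :=
  {p | (k : ℝ) * (α / 2 ^ N) ≤ p.1 - t₀ ∧ p.1 - t₀ ≤ ((k : ℝ) + 1) * (α / 2 ^ N) ∧
    ∀ i, ym N k i - M * (α / 2 ^ N) ≤ p.2 i ∧ p.2 i ≤ yM N k i + M * (α / 2 ^ N)}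

/-- Nestedness of the partitioned bounds for the ODE system `y' = f(t,y)` under
refinement: `y^{N+1,2k}_{i,m} ≥ y^{N,k}_{i,m}` and `y^{N+1,2k}_{i,M} ≤ y^{N,k}_{i,M}`
for all `N` and `0 ≤ k ≤ 2^N`. -/
theorem stmt_13 (n : ℕ) (t₀ α M : ℝ) (hα : 0 < α) (hM : 0 < M)
    (y₀ : Fin n → ℝ) (f : ℝ → (Fin n → ℝ) → (Fin n → ℝ))
    (R : Set (ℝ × (Fin n → ℝ))) (hRcomp : IsCompact R)
    (hcont : ContinuousOn (fun p : ℝ × (Fin n → ℝ) => f p.1 p.2) R)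
    (hbound : ∀ p ∈ R, ∀ i, |f p.1 p.2 i| ≤ M)
    (ym yM : ℕ → ℕ → Fin n → ℝ)
    (h0m : ∀ N, ym N 0 = y₀) (h0M : ∀ N, yM N 0 = y₀)
    (hsub : ∀ N k : ℕ, k < 2 ^ N → odeRegion n t₀ α M ym yM N k ⊆ R)
    (hne : ∀ N k : ℕ, k < 2 ^ N → (odeRegion n t₀ α M ym yM N k).Nonempty)
    (hrecm : ∀ N k : ℕ, k < 2 ^ N → ∀ i, ym N (k + 1) i =
      ym N k i + sInf ((fun p : ℝ × (Fin n → ℝ) => f p.1 p.2 i) ''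
        odeRegion n t₀ α M ym yM N k) * (α / 2 ^ N))
    (hrecM : ∀ N k : ℕ, k < 2 ^ N → ∀ i, yM N (k + 1) i =
      yM N k i + sSup ((fun p : ℝ × (Fin n → ℝ) => f p.1 p.2 i) ''
        odeRegion n t₀ α M ym yM N k) * (α / 2 ^ N)) :
    ∀ N : ℕ, ∀ k ≤ 2 ^ N, ∀ i,
      ym N k i ≤ ym (N + 1) (2 * k) i ∧ yM (N + 1) (2 * k) i ≤ yM N k i := by

  intro N
  have hhpos : (0:ℝ) < α / 2 ^ N := by positivity
  have hh'pos : (0:ℝ) < α / 2 ^ (N+1) := by positivity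
  have hE : (α : ℝ) / 2 ^ (N+1) = (α / 2 ^ N) / 2 := by
    rw [pow_succ]; ring
  have hpow : 2 ^ (N+1) = 2 * 2 ^ N := by rw [pow_succ]; ring
  intro k
  induction k with
  | zero => intro _ i; simp [h0m, h0M]
  | succ k ih =>
    intro hk i
    have hk' : k < 2 ^ N := hk
    have ih' := ih hk'.le
    have h2k : 2 * k < 2 ^ (N+1) := by omega
    have h2k1 : 2 * k + 1 < 2 ^ (N+1) := by omega
    have hRsub : odeRegion n t₀ α M ym yM N k ⊆ R := hsub N k hk'
    have hRsub0 : odeRegion n t₀ α M ym yM (N+1) (2*k) ⊆ R := hsub (N+1) (2*k) h2k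
    have hRsub1 : odeRegion n t₀ α M ym yM (N+1) (2*k+1) ⊆ R := hsub (N+1) (2*k+1) h2k1
    have hne0 := hne (N+1) (2*k) h2k
    have hne1 := hne (N+1) (2*k+1) h2k1
    -- lower/upper bounds on inf/sup over the refined regions
    have hm0low : ∀ j, -M ≤ sInf ((fun p : ℝ × (Fin n → ℝ) => f p.1 p.2 j) ''
        odeRegion n t₀ α M ym yM (N+1) (2*k)) := by
      intro j
      refine le_csInf (hne0.image _) ?_
      rintro _ ⟨p, hp, rfl⟩
      exact (abs_le.mp (hbound p (hRsub0 hp) j)).1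
    have hM0up : ∀ j, sSup ((fun p : ℝ × (Fin n → ℝ) => f p.1 p.2 j) ''
        odeRegion n t₀ α M ym yM (N+1) (2*k)) ≤ M := by
      intro j
      refine csSup_le (hne0.image _) ?_
      rintro _ ⟨p, hp, rfl⟩
      exact (abs_le.mp (hbound p (hRsub0 hp) j)).2
    -- S0 ⊆ S
    have hS0 : odeRegion n t₀ α M ym yM (N+1) (2*k) ⊆ odeRegion n t₀ α M ym yM N k := by
      rintro ⟨t, y⟩ ⟨ht1, ht2, hy⟩
      refine ⟨?_, ?_, fun j => ?_⟩
      · push_cast at ht1 ⊢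
        rw [hE] at ht1
        linarith
      · push_cast at ht2 ⊢
        rw [hE] at ht2
        linarith [hhpos]
      · obtain ⟨hy1, hy2⟩ := hy j
        rw [hE] at hy1 hy2
        have hMx : 0 < M * (α / 2 ^ N) := mul_pos hM hhpos
        exact ⟨by linarith [(ih' j).1], by linarith [(ih' j).2]⟩
    -- bounds on the intermediate values
    have hmid_m : ∀ j, ym N k j - M * (α / 2 ^ (N+1)) ≤ ym (N+1) (2*k+1) j := by
      intro j
      rw [hrecm (N+1) (2*k) h2k j]
      have := mul_le_mul_of_nonneg_right (hm0low j) hh'pos.le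
      linarith [(ih' j).1]
    have hmid_M : ∀ j, yM (N+1) (2*k+1) j ≤ yM N k j + M * (α / 2 ^ (N+1)) := by
      intro j
      rw [hrecM (N+1) (2*k) h2k j]
      have := mul_le_mul_of_nonneg_right (hM0up j) hh'pos.le
      linarith [(ih' j).2]
    -- S1 ⊆ S
    have hS1 : odeRegion n t₀ α M ym yM (N+1) (2*k+1) ⊆ odeRegion n t₀ α M ym yM N k := by
      rintro ⟨t, y⟩ ⟨ht1, ht2, hy⟩
      refine ⟨?_, ?_, fun j => ?_⟩
      · push_cast at ht1 ⊢
        rw [hE] at ht1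
        linarith [hhpos]
      · push_cast at ht2 ⊢
        rw [hE] at ht2
        linarith
      · obtain ⟨hy1, hy2⟩ := hy j
        have hmm := hmid_m j
        have hMM := hmid_M j
        rw [hE] at hy1 hy2 hmm hMM
        exact ⟨by linarith, by linarith⟩
    -- bddness over S
    have hbddB : BddBelow ((fun p : ℝ × (Fin n → ℝ) => f p.1 p.2 i) ''
        odeRegion n t₀ α M ym yM N k) := by
      refine ⟨-M, ?_⟩
      rintro _ ⟨p, hp, rfl⟩
      exact (abs_le.mp (hbound p (hRsub hp) i)).1
    have hbddA : BddAbove ((fun p : ℝ × (Fin n → ℝ) => f p.1 p.2 i) ''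
        odeRegion n t₀ α M ym yM N k) := by
      refine ⟨M, ?_⟩
      rintro _ ⟨p, hp, rfl⟩
      exact (abs_le.mp (hbound p (hRsub hp) i)).2
    -- inf/sup comparisons
    have hm1 : sInf ((fun p : ℝ × (Fin n → ℝ) => f p.1 p.2 i) ''
          odeRegion n t₀ α M ym yM N k) ≤
        sInf ((fun p : ℝ × (Fin n → ℝ) => f p.1 p.2 i) ''
          odeRegion n t₀ α M ym yM (N+1) (2*k)) :=
      csInf_le_csInf hbddB (hne0.image _) (Set.image_mono hS0)
    have hm2 : sInf ((fun p : ℝ × (Fin n → ℝ) => f p.1 p.2 i) ''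
          odeRegion n t₀ α M ym yM N k) ≤
        sInf ((fun p : ℝ × (Fin n → ℝ) => f p.1 p.2 i) ''
          odeRegion n t₀ α M ym yM (N+1) (2*k+1)) :=
      csInf_le_csInf hbddB (hne1.image _) (Set.image_mono hS1)
    have hM1 : sSup ((fun p : ℝ × (Fin n → ℝ) => f p.1 p.2 i) ''
          odeRegion n t₀ α M ym yM (N+1) (2*k)) ≤
        sSup ((fun p : ℝ × (Fin n → ℝ) => f p.1 p.2 i) ''
          odeRegion n t₀ α M ym yM N k) :=
      csSup_le_csSup hbddA (hne0.image _) (Set.image_mono hS0)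
    have hM2 : sSup ((fun p : ℝ × (Fin n → ℝ) => f p.1 p.2 i) ''
          odeRegion n t₀ α M ym yM (N+1) (2*k+1)) ≤
        sSup ((fun p : ℝ × (Fin n → ℝ) => f p.1 p.2 i) ''
          odeRegion n t₀ α M ym yM N k) :=
      csSup_le_csSup hbddA (hne1.image _) (Set.image_mono hS1)
    -- final arithmetic
    have hidx : 2 * (k + 1) = 2 * k + 1 + 1 := by ring
    rw [hidx]
    constructor
    · rw [hrecm N k hk' i, hrecm (N+1) (2*k+1) h2k1 i, hrecm (N+1) (2*k) h2k i]
      have p1 := mul_le_mul_of_nonneg_right hm1 hh'pos.le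
      have p2 := mul_le_mul_of_nonneg_right hm2 hh'pos.le
      rw [hE] at p1 p2 ⊢
      linarith [(ih' i).1]
    · rw [hrecM N k hk' i, hrecM (N+1) (2*k+1) h2k1 i, hrecM (N+1) (2*k) h2k i]
      have p1 := mul_le_mul_of_nonneg_right hM1 hh'pos.le
      have p2 := mul_le_mul_of_nonneg_right hM2 hh'pos.le
      rw [hE] at p1 p2 ⊢
      linarith [(ih' i).2]
end

section
/- Let f : R → ℝⁿ be continuous, bounded by M, and Lipschitz in y with constant L_f (in the ∞-norm, with 1-norm on the y-difference) on the parallelepiped R. In the partitioned-bounds construction with y^{N,k}_{i,M}, y^{N,k}_{i,m} as above, for every ε > 0 there is N₀ such that for all N ≥ N₀ and all 1 ≤ k ≤ 2^N: y^{N,k}_{i,M} - y^{N,k}_{i,m} ≤ (2n L_f M (α/2^N) + ε)(exp(n L_f α k/2^N) - 1)/(n L_f). Consequently max_{1 ≤ k ≤ 2^N} max_i (y^{N,k}_{i,M} - y^{N,k}_{i,m}) → 0 as N → ∞. -/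
open Set Finset

set_option maxHeartbeats 1600000 in
/-- Convergence of the partitioned bounds: if `f` is moreover Lipschitz in `y` with
constant `L_f` (componentwise, 1-norm on the `y`-difference), then for every `ε > 0`
there is `N₀` such that for all `N ≥ N₀` and `1 ≤ k ≤ 2^N`
`y^{N,k}_{i,M} - y^{N,k}_{i,m} ≤ (2 n L_f M α/2^N + ε)(exp(n L_f α k/2^N) - 1)/(n L_f)`;
consequently the maximal gap tends to `0` as `N → ∞`. -/
theorem stmt_14 (n : ℕ) (hn : 1 ≤ n) (t₀ α M Lf : ℝ) (hα : 0 < α) (hM : 0 < M)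
    (hLf : 0 < Lf)
    (y₀ : Fin n → ℝ) (f : ℝ → (Fin n → ℝ) → (Fin n → ℝ))
    (R : Set (ℝ × (Fin n → ℝ))) (hRcomp : IsCompact R)
    (hcont : ContinuousOn (fun p : ℝ × (Fin n → ℝ) => f p.1 p.2) R)
    (hbound : ∀ p ∈ R, ∀ i, |f p.1 p.2 i| ≤ M)
    (hLip : ∀ p ∈ R, ∀ q ∈ R, ∀ i,
      |f p.1 p.2 i - f p.1 q.2 i| ≤ Lf * ∑ j, |p.2 j - q.2 j|)
    (ym yM : ℕ → ℕ → Fin n → ℝ)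
    (h0m : ∀ N, ym N 0 = y₀) (h0M : ∀ N, yM N 0 = y₀)
    (hsub : ∀ N k : ℕ, k < 2 ^ N → odeRegion n t₀ α M ym yM N k ⊆ R)
    (hne : ∀ N k : ℕ, k < 2 ^ N → (odeRegion n t₀ α M ym yM N k).Nonempty)
    (hrecm : ∀ N k : ℕ, k < 2 ^ N → ∀ i, ym N (k + 1) i =
      ym N k i + sInf ((fun p : ℝ × (Fin n → ℝ) => f p.1 p.2 i) ''
        odeRegion n t₀ α M ym yM N k) * (α / 2 ^ N))
    (hrecM : ∀ N k : ℕ, k < 2 ^ N → ∀ i, yM N (k + 1) i =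
      yM N k i + sSup ((fun p : ℝ × (Fin n → ℝ) => f p.1 p.2 i) ''
        odeRegion n t₀ α M ym yM N k) * (α / 2 ^ N)) :
    (∀ ε > (0 : ℝ), ∃ N₀ : ℕ, ∀ N ≥ N₀, ∀ k : ℕ, 1 ≤ k → k ≤ 2 ^ N → ∀ i,
      yM N k i - ym N k i ≤
        (2 * n * Lf * M * (α / 2 ^ N) + ε) *
          (Real.exp (n * Lf * α * k / 2 ^ N) - 1) / (n * Lf)) ∧
    (∀ ε > (0 : ℝ), ∃ N₀ : ℕ, ∀ N ≥ N₀, ∀ k : ℕ, 1 ≤ k → k ≤ 2 ^ N → ∀ i,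
      yM N k i - ym N k i ≤ ε) := by
  have hn0 : (0:ℝ) < (n:ℝ) := by exact_mod_cast hn
  -- uniform continuity modulus
  have huc : ∀ ε > (0:ℝ), ∃ δ > (0:ℝ), ∀ p ∈ R, ∀ q ∈ R, dist p q < δ →
      ∀ i, |f p.1 p.2 i - f q.1 q.2 i| ≤ ε := by
    intro ε hε
    have h1 : UniformContinuousOn (fun p : ℝ × (Fin n → ℝ) => f p.1 p.2) R :=
      hRcomp.uniformContinuousOn_of_continuous hcont
    rw [Metric.uniformContinuousOn_iff] at h1
    obtain ⟨δ, hδ, hd⟩ := h1 ε hε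
    refine ⟨δ, hδ, fun p hp q hq hpq i => ?_⟩
    have h2 := hd p hp q hq hpq
    have h3 : dist (f p.1 p.2 i) (f q.1 q.2 i) ≤ dist (f p.1 p.2) (f q.1 q.2) :=
      dist_le_pi_dist _ _ i
    rw [Real.dist_eq] at h3
    linarith
  have hsmall : ∀ τ : ℝ, 0 < τ → ∃ N₀ : ℕ, ∀ N ≥ N₀, α / 2 ^ N < τ := by
    intro τ hτ
    obtain ⟨N₀, hN₀⟩ := pow_unbounded_of_one_lt (α / τ) (one_lt_two (α := ℝ))
    refine ⟨N₀, fun N hN => ?_⟩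
    have h1 : (2:ℝ) ^ N₀ ≤ 2 ^ N := pow_le_pow_right₀ one_le_two hN
    have h2 : α / τ < 2 ^ N := hN₀.trans_le h1
    have h3 : (0:ℝ) < 2 ^ N := by positivity
    rw [div_lt_iff₀ h3]
    rw [div_lt_iff₀ hτ] at h2
    nlinarith
  -- core discrete Gronwall estimate
  have core : ∀ ε > (0:ℝ), ∃ N₀ : ℕ, ∀ N ≥ N₀, ∀ k : ℕ, k ≤ 2 ^ N → ∀ i,
      yM N k i - ym N k i ≤
        (2 * n * Lf * M * (α / 2 ^ N) + ε) *
          ((1 + n * Lf * (α / 2 ^ N)) ^ k - 1) / (n * Lf) := by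
    intro ε hε
    obtain ⟨δ, hδ, hd⟩ := huc ε hε
    obtain ⟨N₀, hN₀⟩ := hsmall δ hδ
    refine ⟨N₀, fun N hN => ?_⟩
    set h : ℝ := α / 2 ^ N with hh
    have hhpos : 0 < h := by positivity
    have hhδ : h < δ := hN₀ N hN
    -- key one-step oscillation bound
    have key : ∀ k : ℕ, k < 2 ^ N → ∀ i,
        sSup ((fun p : ℝ × (Fin n → ℝ) => f p.1 p.2 i) '' odeRegion n t₀ α M ym yM N k) -
        sInf ((fun p : ℝ × (Fin n → ℝ) => f p.1 p.2 i) '' odeRegion n t₀ α M ym yM N k) ≤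
        Lf * ∑ j, (yM N k j - ym N k j) + 2 * n * Lf * M * h + ε := by
      intro k hk i
      set S := (fun p : ℝ × (Fin n → ℝ) => f p.1 p.2 i) '' odeRegion n t₀ α M ym yM N k with hS
      have hSne : S.Nonempty := (hne N k hk).image _
      have hC : ∀ a ∈ S, ∀ b ∈ S,
          a - b ≤ Lf * ∑ j, (yM N k j - ym N k j) + 2 * n * Lf * M * h + ε := by
        rintro a ⟨p, hp, rfl⟩ b ⟨q, hq, rfl⟩
        have hp' := hp; have hq' := hq
        simp only [odeRegion, Set.mem_setOf_eq] at hp' hq'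
        obtain ⟨hp1, hp2, hp3⟩ := hp'
        obtain ⟨hq1, hq2, hq3⟩ := hq'
        have hrmem : ((p.1, q.2) : ℝ × (Fin n → ℝ)) ∈ odeRegion n t₀ α M ym yM N k := by
          simp only [odeRegion, Set.mem_setOf_eq]
          exact ⟨hp1, hp2, hq3⟩
        have hpR := hsub N k hk hp
        have hqR := hsub N k hk hq
        have hrR := hsub N k hk hrmem
        have hlip := hLip p hpR ((p.1, q.2)) hrR i
        simp only at hlip
        have hsumabs : ∑ j, |p.2 j - q.2 j| ≤
            ∑ j, (yM N k j - ym N k j) + 2 * n * M * h := by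
          have hj : ∀ j, |p.2 j - q.2 j| ≤ (yM N k j - ym N k j) + 2 * M * h := by
            intro j
            have h1 := (hp3 j).1; have h2 := (hp3 j).2
            have h3 := (hq3 j).1; have h4 := (hq3 j).2
            rw [abs_le]; constructor <;> linarith
          calc ∑ j, |p.2 j - q.2 j|
              ≤ ∑ j : Fin n, ((yM N k j - ym N k j) + 2 * M * h) :=
                Finset.sum_le_sum (fun j _ => hj j)
            _ = ∑ j, (yM N k j - ym N k j) + 2 * n * M * h := by
                rw [Finset.sum_add_distrib, Finset.sum_const, Finset.card_univ,
                  Fintype.card_fin, nsmul_eq_mul]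
                ring
        have htd : dist ((p.1, q.2) : ℝ × (Fin n → ℝ)) q < δ := by
          rw [Prod.dist_eq]
          have h5 : dist ((p.1, q.2) : ℝ × (Fin n → ℝ)).2 q.2 = 0 := dist_self _
          rw [h5, max_eq_left dist_nonneg]
          have h6 : dist ((p.1, q.2) : ℝ × (Fin n → ℝ)).1 q.1 = |p.1 - q.1| := Real.dist_eq _ _
          rw [h6]
          have h7 : ((k:ℝ) + 1) * h = (k:ℝ) * h + h := by ring
          have h8 : |p.1 - q.1| ≤ h := by
            rw [abs_le]; constructor <;> linarith
          linarith
        have htime := hd ((p.1, q.2)) hrR q hqR htd i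
        simp only at htime
        have t1 : f p.1 p.2 i - f p.1 q.2 i ≤ Lf * ∑ j, |p.2 j - q.2 j| :=
          (le_abs_self _).trans hlip
        have t2 : f p.1 q.2 i - f q.1 q.2 i ≤ ε := (le_abs_self _).trans htime
        have t3 : Lf * ∑ j, |p.2 j - q.2 j| ≤
            Lf * (∑ j, (yM N k j - ym N k j) + 2 * n * M * h) :=
          mul_le_mul_of_nonneg_left hsumabs hLf.le
        have t4 : Lf * (∑ j, (yM N k j - ym N k j) + 2 * n * M * h) =
            Lf * ∑ j, (yM N k j - ym N k j) + 2 * n * Lf * M * h := by ring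
        linarith
      have hmain : sSup S ≤ (Lf * ∑ j, (yM N k j - ym N k j) + 2 * n * Lf * M * h + ε)
          + sInf S := by
        refine csSup_le hSne (fun a ha => ?_)
        have h9 : a - (Lf * ∑ j, (yM N k j - ym N k j) + 2 * n * Lf * M * h + ε) ≤ sInf S :=
          le_csInf hSne (fun b hb => by have := hC a ha b hb; linarith)
        linarith
      linarith
    -- induction on k
    have ind : ∀ k : ℕ, k ≤ 2 ^ N → ∀ i, yM N k i - ym N k i ≤
        (2 * n * Lf * M * h + ε) * ((1 + n * Lf * h) ^ k - 1) / (n * Lf) := by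
      intro k
      induction k with
      | zero =>
        intro _ i
        rw [h0m, h0M]
        simp
      | succ k IH =>
        intro hk1 i
        have hk : k < 2 ^ N := hk1
        have IH' := IH hk.le
        have hrm := hrecm N k hk i
        have hrM := hrecM N k hk i
        have hkey := key k hk i
        set g : ℝ := (2 * n * Lf * M * h + ε) * ((1 + n * Lf * h) ^ k - 1) / (n * Lf) with hg
        have hgnn : 0 ≤ g := by
          have h1 : (1:ℝ) ≤ (1 + n * Lf * h) ^ k := one_le_pow₀ (by nlinarith [mul_pos (mul_pos hn0 hLf) hhpos])
          have h2 : 0 ≤ 2 * n * Lf * M * h + ε := by positivity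
          have h3 : 0 < (n:ℝ) * Lf := by positivity
          apply div_nonneg _ h3.le
          nlinarith
        have hsum : ∑ j, (yM N k j - ym N k j) ≤ n * g := by
          calc ∑ j, (yM N k j - ym N k j) ≤ ∑ _j : Fin n, g :=
              Finset.sum_le_sum (fun j _ => IH' j)
            _ = n * g := by
              rw [Finset.sum_const, Finset.card_univ, Fintype.card_fin, nsmul_eq_mul]
        have e1 : yM N (k+1) i - ym N (k+1) i = (yM N k i - ym N k i) +
            (sSup ((fun p : ℝ × (Fin n → ℝ) => f p.1 p.2 i) '' odeRegion n t₀ α M ym yM N k) -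
             sInf ((fun p : ℝ × (Fin n → ℝ) => f p.1 p.2 i) '' odeRegion n t₀ α M ym yM N k)) * h := by
          rw [hrM, hrm]; ring
        have e2 : (sSup ((fun p : ℝ × (Fin n → ℝ) => f p.1 p.2 i) '' odeRegion n t₀ α M ym yM N k) -
             sInf ((fun p : ℝ × (Fin n → ℝ) => f p.1 p.2 i) '' odeRegion n t₀ α M ym yM N k)) * h ≤
            (Lf * (n * g) + 2 * n * Lf * M * h + ε) * h := by
          apply mul_le_mul_of_nonneg_right _ hhpos.le
          have := mul_le_mul_of_nonneg_left hsum hLf.le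
          linarith
        have halg : g * (1 + n * Lf * h) + (2 * n * Lf * M * h + ε) * h =
            (2 * n * Lf * M * h + ε) * ((1 + n * Lf * h) ^ (k+1) - 1) / (n * Lf) := by
          rw [hg, pow_succ]
          have hnLf : (n:ℝ) * Lf ≠ 0 := by positivity
          field_simp
          ring
        have hfin : yM N (k+1) i - ym N (k+1) i ≤
            g * (1 + n * Lf * h) + (2 * n * Lf * M * h + ε) * h := by
          have := IH' i
          nlinarith
        rw [halg] at hfin
        exact hfin
    exact ind
  have part1 : ∀ ε > (0 : ℝ), ∃ N₀ : ℕ, ∀ N ≥ N₀, ∀ k : ℕ, 1 ≤ k → k ≤ 2 ^ N → ∀ i,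
      yM N k i - ym N k i ≤
        (2 * n * Lf * M * (α / 2 ^ N) + ε) *
          (Real.exp (n * Lf * α * k / 2 ^ N) - 1) / (n * Lf) := by
    intro ε hε
    obtain ⟨N₀, hc⟩ := core ε hε
    refine ⟨N₀, fun N hN k _ hk2 i => ?_⟩
    have hb := hc N hN k hk2 i
    have hhpos : (0:ℝ) < α / 2 ^ N := by positivity
    have hexp : (1 + n * Lf * (α / 2 ^ N)) ^ k ≤ Real.exp (n * Lf * α * k / 2 ^ N) := by
      have h1 : (1 : ℝ) + n * Lf * (α / 2 ^ N) ≤ Real.exp (n * Lf * (α / 2 ^ N)) := by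
        have := Real.add_one_le_exp (n * Lf * (α / 2 ^ N)); linarith
      have h2 : (1 + n * Lf * (α / 2 ^ N)) ^ k ≤ (Real.exp (n * Lf * (α / 2 ^ N))) ^ k :=
        pow_le_pow_left₀ (by positivity) h1 k
      rw [← Real.exp_nat_mul] at h2
      have h3 : (k:ℝ) * (n * Lf * (α / 2 ^ N)) = n * Lf * α * k / 2 ^ N := by ring
      rwa [h3] at h2
    have hA : (0:ℝ) ≤ 2 * n * Lf * M * (α / 2 ^ N) + ε := by positivity
    have hnLf : (0:ℝ) < (n:ℝ) * Lf := by positivity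
    calc yM N k i - ym N k i
        ≤ (2 * n * Lf * M * (α / 2 ^ N) + ε) *
            ((1 + n * Lf * (α / 2 ^ N)) ^ k - 1) / (n * Lf) := hb
      _ ≤ (2 * n * Lf * M * (α / 2 ^ N) + ε) *
            (Real.exp (n * Lf * α * k / 2 ^ N) - 1) / (n * Lf) := by
          gcongr
  refine ⟨part1, ?_⟩
  intro ε hε
  set E : ℝ := Real.exp (n * Lf * α) with hE
  have hE1 : 1 < E := by
    have := Real.add_one_le_exp (n * Lf * α)
    have h1 : (0:ℝ) < n * Lf * α := by positivity
    rw [hE]; linarith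
  set ε' : ℝ := ε * (n * Lf) / (2 * (E - 1)) with hε'
  have hε'pos : 0 < ε' := by
    apply div_pos (by positivity)
    nlinarith
  obtain ⟨N₁, h1⟩ := part1 ε' hε'pos
  have hden : (0:ℝ) < ε' / (2 * n * Lf * M) := by positivity
  obtain ⟨N₂, h2⟩ := hsmall (ε' / (2 * n * Lf * M)) hden
  refine ⟨max N₁ N₂, fun N hN k hk1 hk2 i => ?_⟩
  have hb := h1 N (le_trans (le_max_left _ _) hN) k hk1 hk2 i
  have hsm := h2 N (le_trans (le_max_right _ _) hN)
  have hApos : (0:ℝ) < 2 * n * Lf * M := by positivity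
  have hAle : 2 * n * Lf * M * (α / 2 ^ N) ≤ ε' := by
    rw [lt_div_iff₀ hApos] at hsm
    nlinarith
  have hk2' : (k:ℝ) ≤ 2 ^ N := by exact_mod_cast hk2
  have h2N : (0:ℝ) < 2 ^ N := by positivity
  have hexple : Real.exp (n * Lf * α * k / 2 ^ N) ≤ E := by
    rw [hE]
    apply Real.exp_le_exp.mpr
    rw [div_le_iff₀ h2N]
    have : (0:ℝ) ≤ n * Lf * α := by positivity
    nlinarith
  have hexpge : (1:ℝ) ≤ Real.exp (n * Lf * α * k / 2 ^ N) :=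
    Real.one_le_exp (by positivity)
  have hnLf : (0:ℝ) < (n:ℝ) * Lf := by positivity
  have hstep : (2 * n * Lf * M * (α / 2 ^ N) + ε') *
      (Real.exp (n * Lf * α * k / 2 ^ N) - 1) / (n * Lf) ≤
      (2 * ε') * (E - 1) / (n * Lf) := by
    have hmul : (2 * n * Lf * M * (α / 2 ^ N) + ε') *
        (Real.exp (n * Lf * α * k / 2 ^ N) - 1) ≤ (2 * ε') * (E - 1) :=
      mul_le_mul (by linarith) (by linarith) (by linarith) (by positivity)
    exact div_le_div_of_nonneg_right hmul hnLf.le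
  have hfin : (2 * ε') * (E - 1) / (n * Lf) = ε := by
    rw [hε']
    have hE0 : E - 1 ≠ 0 := by linarith
    have hnLf' : (n:ℝ) * Lf ≠ 0 := hnLf.ne'
    field_simp
  linarith
end

section
/- Let γ ≥ 1 and k ≥ 1, h ≥ 3 be integers. Suppose a sequence (c_j)_{j=0}^{k} of nonnegative reals satisfies c_0 = 0 and c_j ≤ γ c_{j-1} + (h-1)(j-1)^{h-2} γ^{h(j-1)} for 1 ≤ j ≤ k. Then c_k ≤ k^{h-1} γ^{kh}. -/
/-!
Write `h = m + 2` and prove `c_j ≤ j^(m+1) γ^(j h)` by induction on `j`. Since `γ ≥ 1`, both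
`γ · γ^(n h)` and `γ^(h n)` are at most `γ^((n+1) h)`, so the recursion gives
`c_{n+1} ≤ (n^(m+1) + (m+1) n^m) γ^((n+1) h)`; the bracket consists of the two leading terms
of the binomial expansion of `(n+1)^(m+1)`.
-/

theorem pow_succ_add_mul_pow_le_add_one_pow {R : Type*} [CommSemiring R] [PartialOrder R]
    [IsOrderedRing R] {x : R} (hx : 0 ≤ x) (m : ℕ) :
    x ^ (m + 1) + (m + 1) * x ^ m ≤ (x + 1) ^ (m + 1) := by
  induction m with
  | zero => simp
  | succ m ih =>
    have hcoef : (0 : R) ≤ m + 1 := add_nonneg m.cast_nonneg zero_le_one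
    push_cast
    calc x ^ (m + 2) + (m + 1 + 1) * x ^ (m + 1)
        ≤ x ^ (m + 2) + (m + 1 + 1) * x ^ (m + 1) + (m + 1) * x ^ m :=
          le_add_of_nonneg_right (mul_nonneg hcoef (pow_nonneg hx m))
      _ = (x + 1) * (x ^ (m + 1) + (m + 1) * x ^ m) := by ring
      _ ≤ (x + 1) * (x + 1) ^ (m + 1) := mul_le_mul_of_nonneg_left ih (add_nonneg hx zero_le_one)
      _ = (x + 1) ^ (m + 1 + 1) := by ring

theorem mul_pow_add_mul_pow_le_succ_pow {γ : ℝ} (hγ : 1 ≤ γ) (m n : ℕ) :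
    γ * ((n : ℝ) ^ (m + 1) * γ ^ (n * (m + 2))) + (m + 1) * (n : ℝ) ^ m * γ ^ ((m + 2) * n)
      ≤ ((n + 1 : ℕ) : ℝ) ^ (m + 1) * γ ^ ((n + 1) * (m + 2)) := by
  set G := γ ^ ((n + 1) * (m + 2))
  have hshift : γ * γ ^ (n * (m + 2)) ≤ G := by
    rw [← pow_succ']
    exact pow_le_pow_right₀ hγ (by nlinarith)
  have hmono : γ ^ ((m + 2) * n) ≤ G := pow_le_pow_right₀ hγ (by nlinarith)
  calc γ * ((n : ℝ) ^ (m + 1) * γ ^ (n * (m + 2)))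
        + (m + 1) * (n : ℝ) ^ m * γ ^ ((m + 2) * n)
      = (n : ℝ) ^ (m + 1) * (γ * γ ^ (n * (m + 2)))
          + (m + 1) * (n : ℝ) ^ m * γ ^ ((m + 2) * n) := by ring
    _ ≤ (n : ℝ) ^ (m + 1) * G + (m + 1) * (n : ℝ) ^ m * G :=
        add_le_add (mul_le_mul_of_nonneg_left hshift (by positivity))
          (mul_le_mul_of_nonneg_left hmono (by positivity))
    _ = ((n : ℝ) ^ (m + 1) + (m + 1) * (n : ℝ) ^ m) * G := by ring
    _ ≤ ((n + 1 : ℕ) : ℝ) ^ (m + 1) * G := by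
        push_cast
        gcongr
        exact pow_succ_add_mul_pow_le_add_one_pow n.cast_nonneg m

theorem le_pow_mul_pow_of_le_mul_add {γ : ℝ} (hγ : 1 ≤ γ) (m k : ℕ) {c : ℕ → ℝ}
    (h0 : c 0 = 0)
    (hrec : ∀ n < k, c (n + 1) ≤ γ * c n + (m + 1) * (n : ℝ) ^ m * γ ^ ((m + 2) * n)) :
    c k ≤ (k : ℝ) ^ (m + 1) * γ ^ (k * (m + 2)) := by
  induction k with
  | zero => simp [h0]
  | succ n ih =>
    have hcn := ih fun j hj => hrec j (by omega)
    calc c (n + 1) ≤ γ * c n + (m + 1) * (n : ℝ) ^ m * γ ^ ((m + 2) * n) :=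
          hrec n n.lt_succ_self
      _ ≤ γ * ((n : ℝ) ^ (m + 1) * γ ^ (n * (m + 2)))
            + (m + 1) * (n : ℝ) ^ m * γ ^ ((m + 2) * n) := by gcongr
      _ ≤ _ := mul_pow_add_mul_pow_le_succ_pow hγ m n

theorem stmt_15_general (γ : ℝ) (hγ : 1 ≤ γ) (k h : ℕ) (hh : 3 ≤ h)
    (c : ℕ → ℝ) (h0 : c 0 = 0)
    (hrec : ∀ j : ℕ, 1 ≤ j → j ≤ k →
      c j ≤ γ * c (j - 1) + ((h : ℝ) - 1) * ((j : ℝ) - 1) ^ (h - 2) * γ ^ (h * (j - 1))) :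
    c k ≤ (k : ℝ) ^ (h - 1) * γ ^ (k * h) := by
  obtain ⟨m, rfl⟩ : ∃ m, h = m + 2 := ⟨h - 2, by omega⟩
  refine le_pow_mul_pow_of_le_mul_add hγ m k h0 fun n hn => ?_
  have hstep := hrec (n + 1) (by omega) (by omega)
  push_cast at hstep
  simpa only [add_tsub_cancel_right, add_sub_cancel_right, show (m : ℝ) + 2 - 1 = m + 1 by ring]
    using hstep

/-- The inductive estimate of relation 3.43: if `c_0 = 0` and
`c_j ≤ γ c_{j-1} + (h-1)(j-1)^{h-2} γ^{h(j-1)}` for `1 ≤ j ≤ k`, with `γ ≥ 1` and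
`h ≥ 3`, then `c_k ≤ k^{h-1} γ^{kh}`. -/
theorem stmt_15 (γ : ℝ) (hγ : 1 ≤ γ) (k h : ℕ) (hk : 1 ≤ k) (hh : 3 ≤ h)
    (c : ℕ → ℝ) (hc : ∀ j ≤ k, 0 ≤ c j) (h0 : c 0 = 0)
    (hrec : ∀ j : ℕ, 1 ≤ j → j ≤ k →
      c j ≤ γ * c (j - 1) + ((h : ℝ) - 1) * ((j : ℝ) - 1) ^ (h - 2) * γ ^ (h * (j - 1))) :
    c k ≤ (k : ℝ) ^ (h - 1) * γ ^ (k * h) :=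
  stmt_15_general γ hγ k h hh c h0 hrec
end

section
/- Let 1/2 ≤ γ < 1 and k ≥ 1, h ≥ 3 be integers. Suppose a sequence (c_j)_{j=0}^{k} of nonnegative reals satisfies c_0 = 0 and c_j ≤ γ c_{j-1} + (h-1)(j-1)^{h-2} γ^{2(j-2)} for 1 ≤ j ≤ k. Then c_k ≤ k^{h-1} γ^{k-1}. -/
lemma aux_pow (m n : ℕ) : m^(n+1) + (n+1) * m^n ≤ (m+1)^(n+1) := by
  induction n with
  | zero => simp
  | succ n ih =>
    calc m^(n+2) + (n+2) * m^(n+1)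
        ≤ m^(n+2) + (n+2) * m^(n+1) + (n+1) * m^n := Nat.le_add_right _ _
      _ = (m+1) * (m^(n+1) + (n+1) * m^n) := by ring
      _ ≤ (m+1) * (m+1)^(n+1) := Nat.mul_le_mul_left _ ih
      _ = (m+1)^(n+2) := by ring

/-- The inductive estimate of relation 3.45 (sub-critical case): if `c_0 = 0` and
`c_j ≤ γ c_{j-1} + (h-1)(j-1)^{h-2} γ^{2(j-2)}` for `1 ≤ j ≤ k`, with `1/2 ≤ γ < 1`
and `h ≥ 3`, then `c_k ≤ k^{h-1} γ^{k-1}`.  (The exponent `2(j-2)` may be negative,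
so it is taken as an integer power.) -/
theorem stmt_16 (γ : ℝ) (hγ₁ : 1 / 2 ≤ γ) (hγ₂ : γ < 1) (k h : ℕ) (hk : 1 ≤ k) (hh : 3 ≤ h)
    (c : ℕ → ℝ) (hc : ∀ j ≤ k, 0 ≤ c j) (h0 : c 0 = 0)
    (hrec : ∀ j : ℕ, 1 ≤ j → j ≤ k →
      c j ≤ γ * c (j - 1) + ((h : ℝ) - 1) * ((j : ℝ) - 1) ^ (h - 2) * γ ^ (2 * ((j : ℤ) - 2))) :
    c k ≤ (k : ℝ) ^ (h - 1) * γ ^ (k - 1) := by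
  have hγ0 : (0:ℝ) < γ := by linarith
  have hc1 : c 1 ≤ 0 := by
    have := hrec 1 le_rfl hk
    have hz : ((1:ℕ):ℝ) - 1 = 0 := by norm_num
    rw [hz, zero_pow (by omega : h - 2 ≠ 0)] at this
    simpa [h0] using this
  have key : ∀ j, 1 ≤ j → j ≤ k → c j ≤ ((j:ℝ))^(h-1) * γ^(j-1) := by
    intro j hj
    induction j, hj using Nat.le_induction with
    | base =>
      intro _
      have : (0:ℝ) ≤ ((1:ℕ):ℝ)^(h-1) * γ^(1-1) := by positivity
      exact hc1.trans this
    | succ j hj ih =>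
      intro hjk
      have hjk' : j ≤ k := by omega
      have hrecj := hrec (j+1) (by omega) hjk
      have e1 : (2 * (((j+1:ℕ):ℤ) - 2)) = ((2*(j-1) : ℕ) : ℤ) := by push_cast; omega
      rw [e1, zpow_natCast] at hrecj
      have e2 : ((j+1:ℕ):ℝ) - 1 = (j:ℝ) := by push_cast; ring
      rw [show (j+1)-1 = j from rfl, e2] at hrecj
      rcases eq_or_lt_of_le hj with h1 | h2
      · -- j = 1, target c 2 ≤ 2^(h-1) γ
        subst h1
        norm_num at hrecj ⊢
        have hA : γ * c 1 ≤ 0 := by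
          have := mul_le_mul_of_nonneg_left hc1 hγ0.le
          simpa using this
        have hn : h - 1 ≤ 2^(h-2) := by
          have := Nat.lt_two_pow_self (n := h-2); omega
        have hr : (h:ℝ) - 1 ≤ (2:ℝ)^(h-2) := by
          have := (Nat.cast_le (α := ℝ)).2 hn
          push_cast [Nat.cast_sub (show 1 ≤ h by omega)] at this
          linarith
        have h2p : (2:ℝ)^(h-2) ≤ (2:ℝ)^(h-1) * γ := by
          have e : (2:ℝ)^(h-1) = (2:ℝ)^(h-2) * 2 := by
            rw [← pow_succ]; congr 1; omega
          rw [e]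
          nlinarith [pow_pos (by norm_num : (0:ℝ) < 2) (h-2)]
        linarith
      · -- j ≥ 2
        have hj2 : 2 ≤ j := h2
        have ihj := ih hjk'
        have hpow : γ^(2*(j-1)) ≤ γ^j :=
          pow_le_pow_of_le_one hγ0.le hγ₂.le (by omega)
        have hh3 : (3:ℝ) ≤ (h:ℝ) := by exact_mod_cast hh
        have hcoef : (0:ℝ) ≤ ((h:ℝ)-1) * (j:ℝ)^(h-2) := by
          have h1' : (0:ℝ) ≤ (h:ℝ)-1 := by linarith
          have h2' : (0:ℝ) ≤ (j:ℝ)^(h-2) := by positivity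
          exact mul_nonneg h1' h2'
        have hγj : γ * γ^(j-1) = γ^j := by
          rw [← pow_succ']; congr 1; omega
        have hbin : ((j:ℝ))^(h-1) + ((h:ℝ)-1) * (j:ℝ)^(h-2) ≤ ((j:ℝ)+1)^(h-1) := by
          have h1' := aux_pow j (h-2)
          rw [show h-2+1 = h-1 from by omega] at h1'
          have h2' := (Nat.cast_le (α := ℝ)).2 h1'
          push_cast [Nat.cast_sub (show 1 ≤ h by omega)] at h2'
          linarith
        have hγjpos : (0:ℝ) ≤ γ^j := by positivity
        calc c (j+1) ≤ γ * c j + ((h:ℝ)-1) * (j:ℝ)^(h-2) * γ^(2*(j-1)) := hrecj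
          _ ≤ γ * ((j:ℝ)^(h-1) * γ^(j-1)) + ((h:ℝ)-1) * (j:ℝ)^(h-2) * γ^j := by
              gcongr
          _ = ((j:ℝ)^(h-1) + ((h:ℝ)-1) * (j:ℝ)^(h-2)) * γ^j := by
              rw [show γ * ((j:ℝ)^(h-1) * γ^(j-1)) = (j:ℝ)^(h-1) * (γ * γ^(j-1)) from by ring,
                hγj]; ring
          _ ≤ ((j:ℝ)+1)^(h-1) * γ^j := by gcongr
          _ = ((j+1:ℕ):ℝ)^(h-1) * γ^((j+1)-1) := by push_cast; ring_nf
  exact key k hk le_rfl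
end
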